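/- Let D ∈ D(n,m) and D' ∈ D(m,l) be Temperley–Lieb diagrams with no closed loops in their concatenation (ζ(D,D') = 0). If X is mask equivalent to R_q(D) and Y is mask equivalent to R_q(D'), then the product XY is mask equivalent to R_q(D∘D'). -/

import Mathlib

/-!
Over a domain, `R_q(D)_{vw} ≠ 0` exactly when the letters agree along the through lines of `D`
and differ along its cups and caps. Every line of a noncrossing matching joins two positions of
opposite parity, so adding to each letter the parity of its index turns these conditions into
constancy of the labelling along the lines. Hence `X_{vw} Y_{wu} ≠ 0` iff the twisted labels of
`v, w, u` are constant on the components of the concatenation of `D` and `D'`, which forces the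
labels of `v, u` to be constant along the lines of `D ∘ D'`. Conversely, when `ζ(D,D') = 0` every
component reaches the boundary, so such `v, u` extend to exactly one middle word `w`, and
`(XY)_{vu}` is a single nonzero product.
-/
namespace TLBlob

/-- The boundary nodes of an `(n,m)` Temperley–Lieb diagram: `Sum.inl i` is the
`i`-th northern node (0-based), `Sum.inr j` the `j`-th southern node (0-based). -/
abbrev TLNode (n m : ℕ) := Sum (Fin n) (Fin m)

/-- Position of a node in the linear order obtained by reading the northern nodes
left to right and then the southern nodes right to left (so that noncrossing
matchings in the rectangle correspond to noncrossing chords). -/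
def nodePos {n m : ℕ} : TLNode n m → ℕ
  | Sum.inl i => (i : ℕ)
  | Sum.inr j => n + m - 1 - (j : ℕ)

/-- An `(n,m)` Temperley–Lieb diagram: a noncrossing perfect matching (fixed-point
free involution) of the `n` northern and `m` southern nodes. -/
structure TLDiagram (n m : ℕ) where
  pair : TLNode n m → TLNode n m
  involutive : Function.Involutive pair
  fixedFree : ∀ v, pair v ≠ v
  noncrossing : ∀ v w, nodePos v < nodePos w → nodePos w < nodePos (pair v) →
    nodePos (pair v) < nodePos (pair w) → False

/-- `[2] = q + q⁻¹` where `q = x²`. -/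
def twoQ {K : Type*} [CommRing K] (x : Kˣ) : K := (x : K) ^ 2 + ((x⁻¹ : Kˣ) : K) ^ 2

/-- The factor `x^{sign(a-b)}(1-δ_{ab})` associated to a cup/cap line, where the
letters `1,2` of the paper are encoded as `0,1 : Fin 2`. -/
def xfac {K : Type*} [CommRing K] (x : Kˣ) (a b : Fin 2) : K :=
  if a = b then 0 else if b < a then (x : K) else ((x⁻¹ : Kˣ) : K)

/-- The matrix `R_q(D)` associated to an `(n,m)` diagram `D`, with rows indexed by
words `v ∈ {1,2}ⁿ` (as functions `Fin n → Fin 2`) and columns by `w ∈ {1,2}ᵐ`. -/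
def Rmat {K : Type*} [CommRing K] (x : Kˣ) {n m : ℕ} (D : TLDiagram n m) :
    Matrix (Fin n → Fin 2) (Fin m → Fin 2) K := fun v w =>
  (∏ p ∈ Finset.univ.filter
      (fun p : Fin n × Fin n => p.1 < p.2 ∧ D.pair (Sum.inl p.1) = Sum.inl p.2),
    xfac x (v p.1) (v p.2)) *
  (∏ p ∈ Finset.univ.filter
      (fun p : Fin n × Fin m => D.pair (Sum.inl p.1) = Sum.inr p.2),
    (if v p.1 = w p.2 then (1 : K) else 0)) *
  (∏ p ∈ Finset.univ.filter
      (fun p : Fin m × Fin m => p.1 < p.2 ∧ D.pair (Sum.inr p.1) = Sum.inr p.2),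
    xfac x (w p.1) (w p.2))

/-- Two matrices are mask equivalent if they have zero entries in the same places. -/
def MaskEquiv {K : Type*} [CommRing K] {α β : Type*} (M N : Matrix α β K) : Prop :=
  ∀ i j, M i j = 0 ↔ N i j = 0

/-- Nodes of the concatenation `D|D'` of an `(n,m)` and an `(m,l)` diagram:
northern, middle, and southern nodes. -/
abbrev TriNode (n m l : ℕ) := Sum (Fin n) (Sum (Fin m) (Fin l))

def inUp {n m l : ℕ} : TLNode n m → TriNode n m l
  | Sum.inl i => Sum.inl i
  | Sum.inr j => Sum.inr (Sum.inl j)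

def inDown {n m l : ℕ} : TLNode m l → TriNode n m l
  | Sum.inl j => Sum.inr (Sum.inl j)
  | Sum.inr k => Sum.inr (Sum.inr k)

def inOut {n m l : ℕ} : TLNode n l → TriNode n m l
  | Sum.inl i => Sum.inl i
  | Sum.inr k => Sum.inr (Sum.inr k)

/-- Two nodes of the concatenation `D|D'` are linked if they are joined by a line
of `D` or of `D'`. -/
def Linked {n m l : ℕ} (D : TLDiagram n m) (D' : TLDiagram m l) :
    TriNode n m l → TriNode n m l → Prop := fun u v =>
  (∃ a, inUp a = u ∧ inUp (D.pair a) = v) ∨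
  (∃ a, inDown a = u ∧ inDown (D'.pair a) = v)

/-- Connectivity in the concatenation `D|D'`. -/
def Joined {n m l : ℕ} (D : TLDiagram n m) (D' : TLDiagram m l) :
    TriNode n m l → TriNode n m l → Prop :=
  Relation.ReflTransGen (Linked D D')

/-- `E` is the composite diagram `D ∘ D'`: outer nodes are paired in `E` exactly
when they are joined through the concatenation `D|D'`. -/
def IsComposite {n m l : ℕ} (D : TLDiagram n m) (D' : TLDiagram m l)
    (E : TLDiagram n l) : Prop :=
  ∀ u v : TLNode n l, E.pair u = v ↔ (u ≠ v ∧ Joined D D' (inOut u) (inOut v))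

/-- Middle nodes of the concatenation. -/
def IsMiddle {n m l : ℕ} : TriNode n m l → Prop
  | Sum.inr (Sum.inl _) => True
  | _ => False

/-- `ζ(D,D')`: the number of closed loops discarded when forming `D ∘ D'`, i.e. the
number of connected components of the concatenation graph consisting entirely of
middle nodes. -/
noncomputable def zeta {n m l : ℕ} (D : TLDiagram n m) (D' : TLDiagram m l) : ℕ :=
  Nat.card {c : Quot (Linked D D') // ∀ v, Quot.mk (Linked D D') v = c → IsMiddle v}

/-- The identity diagram `1 ∈ D(n,n)`. -/
def IsId {n : ℕ} (E : TLDiagram n n) : Prop :=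
  ∀ i : Fin n, E.pair (Sum.inl i) = Sum.inr i

/-- The diagram `𝒰_i ∈ D(n,n)` (with `1 ≤ i ≤ n-1`, nodes numbered `1,…,n`):
it pairs nodes `(i,i+1)` on the top, `(i',(i+1)')` on the bottom, and `(k,k')`
otherwise.  In the 0-based encoding these are positions `i-1` and `i`. -/
def IsU {n : ℕ} (i : ℕ) (E : TLDiagram n n) : Prop :=
  ∃ (_ : 1 ≤ i) (h2 : i < n),
    E.pair (Sum.inl ⟨i - 1, by omega⟩) = Sum.inl ⟨i, h2⟩ ∧
    E.pair (Sum.inr ⟨i - 1, by omega⟩) = Sum.inr ⟨i, h2⟩ ∧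
    ∀ k : Fin n, (k : ℕ) ≠ i - 1 → (k : ℕ) ≠ i → E.pair (Sum.inl k) = Sum.inr k

/-- The column reached after the first `k` steps of a walk encoded as a word in
`{1,2}ⁿ` (letter `1` = `0 : Fin 2` is a step increasing the column index,
letter `2` = `1 : Fin 2` a step decreasing it). -/
def col {n : ℕ} (a : Fin n → Fin 2) (k : ℕ) : ℤ :=
  ∑ j ∈ Finset.univ.filter (fun j : Fin n => (j : ℕ) < k),
    (if a j = 0 then (1 : ℤ) else -1)

/-- A word encodes a walk on the 1-Pascal graph (column indices stay nonnegative). -/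
def IsWalk {n : ℕ} (a : Fin n → Fin 2) : Prop := ∀ k, 0 ≤ col a k

/-- A pair of walks with a common endpoint, i.e. an element of `W²(n)`. -/
def WalkPair {n : ℕ} (a b : Fin n → Fin 2) : Prop :=
  IsWalk a ∧ IsWalk b ∧ col a n = col b n

/-- Vertex `(l,d)` (level `l`, column `d`) lies in the envelope of the pair `(a,b)`:
between the drawing of `b` reflected in the main vertical and the drawing of `a`,
and not strictly inside the triangle cut off by the piecewise straight line from
`(n,i)` to `(n-i,0)` to `(n,-i)`, where `i = col a n`. -/
def vertOK {n : ℕ} (a b : Fin n → Fin 2) (l : ℕ) (d : ℤ) : Prop :=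
  -(col b l) ≤ d ∧ d ≤ col a l ∧
  ((l : ℤ) - ((n : ℤ) - col a n) ≤ d ∨ d ≤ -((l : ℤ) - ((n : ℤ) - col a n)))

/-- The unit diamond tile with top vertex at level `r`, column `c` (so with
vertices `(r,c)`, `(r+1,c∓1)`, `(r+2,c)`) belongs to the tiling of the envelope
of `(a,b)`. -/
def IsTile {n : ℕ} (a b : Fin n → Fin 2) (r : ℕ) (c : ℤ) : Prop :=
  r + 2 ≤ n ∧ (c - (r : ℤ)) % 2 = 0 ∧ vertOK a b r c ∧
  vertOK a b (r + 1) (c - 1) ∧ vertOK a b (r + 1) (c + 1) ∧ vertOK a b (r + 2) c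

instance {n : ℕ} (a b : Fin n → Fin 2) (r : ℕ) (c : ℤ) : Decidable (IsTile a b r c) := by
  unfold IsTile vertOK; infer_instance

/-- The word `w((a,b))`, as the list of its (1-based) indices: scanning the tiles
of the envelope of `(a,b)` column by column (starting from the side of `a`), top
to bottom within a column, and writing `U_{r+1}` for a tile with top vertex at
level `r` (hence base at row `r+2`). -/
def wordOf {n : ℕ} (a b : Fin n → Fin 2) : List ℕ :=
  (List.range (2 * n + 1)).flatMap fun j =>
    (List.range (n - 1)).filterMap fun r =>
      if IsTile a b r ((n : ℤ) - (j : ℤ)) then some (r + 1) else none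

/-- Extend a word `v ∈ {1,2}ⁿ` by `0` beyond its length (convenience lookup). -/
def ext {n : ℕ} (v : Fin n → Fin 2) (k : ℕ) : Fin 2 :=
  if h : k < n then v ⟨k, h⟩ else 0

/-- The matrix `R(U_i) = R_q(𝒰_i)` acting on `(K²)^{⊗n}`, where `U_i` couples the
(1-based) tensor factors `i` and `i+1`. -/
def RU {K : Type*} [CommRing K] (x : Kˣ) (n i : ℕ) :
    Matrix (Fin n → Fin 2) (Fin n → Fin 2) K := fun v w =>
  (∏ k ∈ Finset.univ.filter (fun k : Fin n => (k : ℕ) + 1 ≠ i ∧ (k : ℕ) ≠ i),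
    (if v k = w k then (1 : K) else 0)) *
  xfac x (ext v (i - 1)) (ext v i) * xfac x (ext w (i - 1)) (ext w i)

/-- `R` of a word in the `U_i`: the corresponding product of matrices. -/
def Rword {K : Type*} [CommRing K] (x : Kˣ) (n : ℕ) (L : List ℕ) :
    Matrix (Fin n → Fin 2) (Fin n → Fin 2) K :=
  (L.map (RU x n)).prod

open Finset Relation

theorem Finset.even_card_of_involution {ι : Type*} {s : Finset ι} (g : ι → ι)
    (hmem : ∀ a ∈ s, g a ∈ s) (hinv : ∀ a ∈ s, g (g a) = a) (hfree : ∀ a ∈ s, g a ≠ a) :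
    Even s.card := by
  have hsum : ∑ _a ∈ s, (1 : ZMod 2) = 0 :=
    Finset.sum_involution (fun a _ => g a) (fun _ _ => by decide) (fun a ha _ => hfree a ha)
      hmem hinv
  simpa [ZMod.natCast_eq_zero_iff_even] using hsum

theorem maskEquiv_mul_of_existsUnique {α β γ K : Type*} [Fintype β] [CommRing K]
    {X : Matrix α β K} {Y : Matrix β γ K} {Z : Matrix α γ K}
    (hsupp : ∀ i k j, X i j * Y j k ≠ 0 → Z i k ≠ 0)
    (huniq : ∀ i k, Z i k ≠ 0 → ∃! j, X i j * Y j k ≠ 0) : MaskEquiv (X * Y) Z := by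
  intro i k
  rw [Matrix.mul_apply]
  by_cases hZ : Z i k = 0
  · refine iff_of_true (sum_eq_zero fun j _ => ?_) hZ
    by_contra hj
    exact hsupp i k j hj hZ
  · obtain ⟨j, hj, hj'⟩ := huniq i k hZ
    rw [sum_eq_single j (fun b _ hb => by_contra fun h => hb (hj' b h)) (by simp)]
    exact iff_of_false hj hZ

theorem Fin.two_add_ofNat_eq_iff (x y : Fin 2) (i j : ℕ) :
    x + Fin.ofNat 2 i = y + Fin.ofNat 2 j ↔ (x = y ↔ (i + j) % 2 = 0) := by
  simp only [Fin.ext_iff, Fin.val_add, Fin.val_ofNat]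
  omega

section

variable {n m l : ℕ}

theorem nodePos_lt (a : TLNode n m) : nodePos a < n + m := by
  rcases a with i | j <;> simp only [nodePos] <;> omega

theorem nodePos_injective : Function.Injective (nodePos : TLNode n m → ℕ) := by
  rintro (i | j) (i' | j') h <;> simp only [nodePos] at h <;>
    simp only [Sum.inl.injEq, Sum.inr.injEq, reduceCtorEq, Fin.ext_iff] <;> omega

theorem exists_nodePos_eq {k : ℕ} (hk : k < n + m) : ∃ a : TLNode n m, nodePos a = k := by
  by_cases h : k < n
  · exact ⟨Sum.inl ⟨k, h⟩, rfl⟩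
  · exact ⟨Sum.inr ⟨n + m - 1 - k, by omega⟩, by simp only [nodePos]; omega⟩

namespace TLDiagram

theorem even_add (D : TLDiagram n m) : Even (n + m) := by
  simpa using Finset.even_card_of_involution (s := univ) D.pair (by simp)
    (fun a _ => D.involutive a) (fun a _ => D.fixedFree a)

variable (D : TLDiagram n m)

theorem pair_eq_comm {a b : TLNode n m} : D.pair a = b ↔ D.pair b = a :=
  ⟨fun h => h ▸ D.involutive a, fun h => h ▸ D.involutive b⟩

/-- The nodes strictly inside a line are matched among themselves, so there is an even number
of them. -/
theorem odd_nodePos_add_of_lt {a : TLNode n m} (h : nodePos a < nodePos (D.pair a)) :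
    Odd (nodePos a + nodePos (D.pair a)) := by
  classical
  set inside := univ.filter fun v : TLNode n m =>
    nodePos a < nodePos v ∧ nodePos v < nodePos (D.pair a)
  have hmem : ∀ v ∈ inside, D.pair v ∈ inside := by
    intro v hv
    simp only [inside, mem_filter, mem_univ, true_and] at hv ⊢
    have hva : D.pair v ≠ a := fun e => by
      obtain rfl : v = D.pair a := by rw [← e, D.involutive]
      omega
    have hvb : D.pair v ≠ D.pair a := fun e => by
      obtain rfl := D.involutive.injective e
      omega
    have hne_a : nodePos (D.pair v) ≠ nodePos a := fun e => hva (nodePos_injective e)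
    have hne_b : nodePos (D.pair v) ≠ nodePos (D.pair a) := fun e => hvb (nodePos_injective e)
    refine ⟨?_, ?_⟩
    · by_contra! hlt
      exact D.noncrossing (D.pair v) a (by omega) (by rw [D.involutive]; omega)
        (by rw [D.involutive]; omega)
    · by_contra! hgt
      exact D.noncrossing a v hv.1 hv.2 (by omega)
  have hcard : inside.card = nodePos (D.pair a) - nodePos a - 1 := by
    rw [← card_image_of_injective _ nodePos_injective, ← Nat.card_Ioo]
    congr 1
    ext k
    simp only [inside, mem_image, mem_filter, mem_univ, true_and, mem_Ioo]
    constructor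
    · rintro ⟨v, hv, rfl⟩; exact hv
    · intro hk
      obtain ⟨v, rfl⟩ := exists_nodePos_eq (lt_trans hk.2 (nodePos_lt _))
      exact ⟨v, hk, rfl⟩
  have heven := Finset.even_card_of_involution D.pair hmem (fun v _ => D.involutive v)
    (fun v _ => D.fixedFree v)
  rw [hcard, Nat.even_iff] at heven
  rw [Nat.odd_iff]
  omega

theorem odd_nodePos_add (a : TLNode n m) : Odd (nodePos a + nodePos (D.pair a)) := by
  rcases lt_or_gt_of_ne (fun h => D.fixedFree a (nodePos_injective h).symm) with h | h
  · exact D.odd_nodePos_add_of_lt h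
  · have := D.odd_nodePos_add_of_lt (a := D.pair a) (by rwa [D.involutive])
    rwa [D.involutive, add_comm] at this

end TLDiagram

def nodeIndex : TLNode n m → ℕ := Sum.elim (fun i => i) (fun j => j)

theorem TLDiagram.nodeIndex_add_mod_two (D : TLDiagram n m) (a : TLNode n m) :
    (nodeIndex (D.pair a) + nodeIndex a) % 2 = 0 ↔ (D.pair a).isLeft ≠ a.isLeft := by
  have hodd := Nat.odd_iff.mp (D.odd_nodePos_add a)
  have heven := Nat.even_iff.mp D.even_add
  rcases a with i | i <;> rcases h : D.pair _ with j | j <;>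
    simp only [h, nodePos, nodeIndex, Sum.elim_inl, Sum.elim_inr, Sum.isLeft_inl,
      Sum.isLeft_inr, ne_eq, not_true_eq_false, Bool.false_eq_true, Bool.true_eq_false,
      not_false_eq_true, iff_true, iff_false] at hodd ⊢ <;> omega

def twist (v : Fin n → Fin 2) : Fin n → Fin 2 := fun i => v i + Fin.ofNat 2 i

theorem twist_involutive : Function.Involutive (twist : (Fin n → Fin 2) → Fin n → Fin 2) := by
  intro v
  funext i
  simp only [twist, Fin.ext_iff, Fin.val_add, Fin.val_ofNat]
  omega

theorem elim_twist (v : Fin n → Fin 2) (w : Fin m → Fin 2) (a : TLNode n m) :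
    Sum.elim (twist v) (twist w) a = Sum.elim v w a + Fin.ofNat 2 (nodeIndex a) := by
  cases a <;> rfl

def TLDiagram.ConstOnLines {α : Type*} (D : TLDiagram n m) (f : TLNode n m → α) : Prop :=
  ∀ a, f (D.pair a) = f a

theorem TLDiagram.elim_twist_pair_eq_iff (D : TLDiagram n m) (v : Fin n → Fin 2)
    (w : Fin m → Fin 2) (a : TLNode n m) :
    Sum.elim (twist v) (twist w) (D.pair a) = Sum.elim (twist v) (twist w) a ↔
      (Sum.elim v w (D.pair a) = Sum.elim v w a ↔ (D.pair a).isLeft ≠ a.isLeft) := by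
  rw [elim_twist, elim_twist, Fin.two_add_ofNat_eq_iff, D.nodeIndex_add_mod_two]

section Mask

variable {K : Type*} [CommRing K] [IsDomain K] (x : Kˣ) (D : TLDiagram n m)

theorem xfac_ne_zero_iff (a b : Fin 2) : xfac x a b ≠ 0 ↔ a ≠ b := by
  by_cases h : a = b
  · simp [xfac, h]
  · by_cases h2 : b < a <;> simp [xfac, h, h2]

theorem prod_xfac_ne_zero_iff {k : ℕ} (ι : Fin k → TLNode n m) (f : Fin k → Fin 2) :
    (∏ p ∈ univ.filter (fun p : Fin k × Fin k => p.1 < p.2 ∧ D.pair (ι p.1) = ι p.2),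
      xfac x (f p.1) (f p.2)) ≠ 0 ↔ ∀ i j, D.pair (ι i) = ι j → f i ≠ f j := by
  simp only [prod_ne_zero_iff, mem_filter, mem_univ, true_and, xfac_ne_zero_iff, Prod.forall]
  refine ⟨fun h i j hij => ?_, fun h i j hij => h i j hij.2⟩
  rcases lt_trichotomy i j with hlt | rfl | hgt
  · exact h i j ⟨hlt, hij⟩
  · exact absurd hij (D.fixedFree _)
  · exact (h j i ⟨hgt, D.pair_eq_comm.mp hij⟩).symm

theorem prod_through_ne_zero_iff (v : Fin n → Fin 2) (w : Fin m → Fin 2) :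
    (∏ p ∈ univ.filter (fun p : Fin n × Fin m => D.pair (Sum.inl p.1) = Sum.inr p.2),
      (if v p.1 = w p.2 then (1 : K) else 0)) ≠ 0 ↔
        ∀ i j, D.pair (Sum.inl i) = Sum.inr j → v i = w j := by
  simp [prod_ne_zero_iff]

theorem Rmat_ne_zero_iff_forall_pair (v : Fin n → Fin 2) (w : Fin m → Fin 2) :
    Rmat x D v w ≠ 0 ↔
      ∀ a, (Sum.elim v w (D.pair a) = Sum.elim v w a ↔ (D.pair a).isLeft ≠ a.isLeft) := by
  rw [Rmat, mul_ne_zero_iff, mul_ne_zero_iff, prod_xfac_ne_zero_iff x D Sum.inl,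
    prod_through_ne_zero_iff, prod_xfac_ne_zero_iff x D Sum.inr]
  constructor
  · rintro ⟨⟨hcup, hthrough⟩, hcap⟩ (i | i) <;> rcases h : D.pair _ with j | j <;>
      simp only [Sum.elim_inl, Sum.elim_inr, Sum.isLeft_inl, Sum.isLeft_inr, ne_eq,
      not_true_eq_false, Bool.false_eq_true, Bool.true_eq_false, not_false_eq_true, iff_true,
      iff_false]
    · exact (hcup i j h).symm
    · exact (hthrough i j h).symm
    · exact hthrough j i (D.pair_eq_comm.mp h)
    · exact (hcap i j h).symm
  · intro h
    refine ⟨⟨fun i j hij => ?_, fun i j hij => ?_⟩, fun i j hij => ?_⟩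
    · simpa [hij, eq_comm] using h (Sum.inl i)
    · simpa [hij, eq_comm] using h (Sum.inl i)
    · simpa [hij, eq_comm] using h (Sum.inr i)

theorem Rmat_ne_zero_iff (v : Fin n → Fin 2) (w : Fin m → Fin 2) :
    Rmat x D v w ≠ 0 ↔ D.ConstOnLines (Sum.elim (twist v) (twist w)) := by
  simp only [Rmat_ne_zero_iff_forall_pair, TLDiagram.ConstOnLines, D.elim_twist_pair_eq_iff]

end Mask

section Composite

variable {α : Type*} (D : TLDiagram n m) (D' : TLDiagram m l)

instance : Std.Symm (Linked D D') where
  symm := by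
    rintro _ _ (⟨a, rfl, rfl⟩ | ⟨a, rfl, rfl⟩)
    · exact Or.inl ⟨D.pair a, rfl, by rw [D.involutive]⟩
    · exact Or.inr ⟨D'.pair a, rfl, by rw [D'.involutive]⟩

variable {D D'}

theorem Joined.symm {p q : TriNode n m l} (h : Joined D D' p q) : Joined D D' q p :=
  Std.Symm.symm (r := ReflTransGen (Linked D D')) _ _ h

theorem exists_inOut_of_not_isMiddle {p : TriNode n m l} (hp : ¬ IsMiddle p) :
    ∃ a : TLNode n l, inOut a = p := by
  rcases p with i | (j | k)
  · exact ⟨Sum.inl i, rfl⟩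
  · exact absurd trivial hp
  · exact ⟨Sum.inr k, rfl⟩

theorem exists_joined_inOut (hz : zeta D D' = 0) (p : TriNode n m l) :
    ∃ a : TLNode n l, Joined D D' (inOut a) p := by
  by_contra! h
  -- otherwise the class of `p` is a closed loop, counted by `ζ`
  have hloop : ∀ v, Quot.mk (Linked D D') v = Quot.mk _ p → IsMiddle v := by
    intro v hv
    by_contra hv'
    obtain ⟨a, rfl⟩ := exists_inOut_of_not_isMiddle hv'
    rw [Quot.eq, EqvGen.eqvGen_eq_reflTransGen] at hv
    exact h a hv
  have : 0 < zeta D D' := Nat.card_pos_iff.mpr ⟨⟨⟨_, hloop⟩⟩, inferInstance⟩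
  omega

variable {v : Fin n → α} {w : Fin m → α} {u : Fin l → α}

theorem elim_inUp (a : TLNode n m) :
    Sum.elim v (Sum.elim w u) (inUp a : TriNode n m l) = Sum.elim v w a := by
  cases a <;> rfl

theorem elim_inDown (a : TLNode m l) :
    Sum.elim v (Sum.elim w u) (inDown a : TriNode n m l) = Sum.elim w u a := by
  cases a <;> rfl

theorem elim_inOut (a : TLNode n l) :
    Sum.elim v (Sum.elim w u) (inOut a : TriNode n m l) = Sum.elim v u a := by
  cases a <;> rfl

theorem elim_eq_of_joined (hD : D.ConstOnLines (Sum.elim v w))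
    (hD' : D'.ConstOnLines (Sum.elim w u)) {p q : TriNode n m l} (h : Joined D D' p q) :
    Sum.elim v (Sum.elim w u) p = Sum.elim v (Sum.elim w u) q := by
  induction h with
  | refl => rfl
  | tail _ hlink ih =>
    rw [ih]
    rcases hlink with ⟨a, rfl, rfl⟩ | ⟨a, rfl, rfl⟩
    · rw [elim_inUp, elim_inUp, hD a]
    · rw [elim_inDown, elim_inDown, hD' a]

variable {E : TLDiagram n l}

theorem IsComposite.constOnLines (hE : IsComposite D D' E) (hD : D.ConstOnLines (Sum.elim v w))
    (hD' : D'.ConstOnLines (Sum.elim w u)) : E.ConstOnLines (Sum.elim v u) := by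
  intro a
  have := elim_eq_of_joined hD hD' ((hE a (E.pair a)).mp rfl).2
  rw [elim_inOut, elim_inOut] at this
  exact this.symm

theorem IsComposite.elim_eq_of_joined (hE : IsComposite D D' E)
    (hE' : E.ConstOnLines (Sum.elim v u)) {a b : TLNode n l}
    (h : Joined D D' (inOut a) (inOut b)) : Sum.elim v u a = Sum.elim v u b := by
  by_cases hab : a = b
  · rw [hab]
  · rw [← (hE a b).mpr ⟨hab, h⟩, hE' a]

theorem IsComposite.exists_middle_word (hE : IsComposite D D' E) (hz : zeta D D' = 0)
    (hE' : E.ConstOnLines (Sum.elim v u)) :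
    ∃ w : Fin m → α, D.ConstOnLines (Sum.elim v w) ∧ D'.ConstOnLines (Sum.elim w u) := by
  -- label each node like a boundary node of its component; by `hE'` the choice does not matter
  choose out hout using exists_joined_inOut hz (D := D) (D' := D')
  set g : TriNode n m l → α := fun p => Sum.elim v u (out p)
  have hg_out (a : TLNode n l) : g (inOut a) = Sum.elim v u a :=
    hE.elim_eq_of_joined hE' (hout (inOut a))
  have hg_link {p q : TriNode n m l} (h : Linked D D' p q) : g q = g p :=
    hE.elim_eq_of_joined hE' (((hout q).trans (Joined.symm (.single h))).trans (hout p).symm)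
  refine ⟨fun j => g (Sum.inr (Sum.inl j)), fun a => ?_, fun a => ?_⟩
  · have hup (b : TLNode n m) :
        Sum.elim v (fun j => g (Sum.inr (Sum.inl j))) b = g (inUp b) := by
      rcases b with i | j
      · exact (hg_out (Sum.inl i)).symm
      · rfl
    rw [hup, hup]
    exact hg_link (Or.inl ⟨a, rfl, rfl⟩)
  · have hdown (b : TLNode m l) :
        Sum.elim (fun j => g (Sum.inr (Sum.inl j))) u b = g (inDown b) := by
      rcases b with j | k
      · rfl
      · exact (hg_out (Sum.inr k)).symm
    rw [hdown, hdown]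
    exact hg_link (Or.inr ⟨a, rfl, rfl⟩)

theorem middle_word_unique (hz : zeta D D' = 0) {w' : Fin m → α}
    (hD : D.ConstOnLines (Sum.elim v w)) (hD' : D'.ConstOnLines (Sum.elim w u))
    (hD₂ : D.ConstOnLines (Sum.elim v w')) (hD₂' : D'.ConstOnLines (Sum.elim w' u)) :
    w = w' := by
  funext j
  obtain ⟨a, ha⟩ := exists_joined_inOut hz (Sum.inr (Sum.inl j) : TriNode n m l)
  have h₁ := elim_eq_of_joined hD hD' ha
  have h₂ := elim_eq_of_joined hD₂ hD₂' ha
  rw [elim_inOut] at h₁ h₂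
  exact h₁.symm.trans h₂

theorem IsComposite.existsUnique_middle_word (hE : IsComposite D D' E) (hz : zeta D D' = 0)
    (hE' : E.ConstOnLines (Sum.elim v u)) :
    ∃! w : Fin m → α, D.ConstOnLines (Sum.elim v w) ∧ D'.ConstOnLines (Sum.elim w u) := by
  obtain ⟨w, hw⟩ := hE.exists_middle_word hz hE'
  exact ⟨w, hw, fun w' hw' => middle_word_unique hz hw'.1 hw'.2 hw.1 hw.2⟩

end Composite

end

/-- Over an integral domain, if no closed loops arise in the
concatenation of `D` and `D'`, `X ∈ [R_q(D)]` and `Y ∈ [R_q(D')]`, then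
`XY ∈ [R_q(D∘D')]`. -/
theorem statement2 {K : Type*} [CommRing K] [IsDomain K] (x : Kˣ) {n m l : ℕ}
    (D : TLDiagram n m) (D' : TLDiagram m l) (E : TLDiagram n l)
    (hE : IsComposite D D' E) (hz : zeta D D' = 0)
    (X : Matrix (Fin n → Fin 2) (Fin m → Fin 2) K)
    (Y : Matrix (Fin m → Fin 2) (Fin l → Fin 2) K)
    (hX : MaskEquiv X (Rmat x D)) (hY : MaskEquiv Y (Rmat x D')) :
    MaskEquiv (X * Y) (Rmat x E) := by
  have hterm (v w u) : X v w * Y w u ≠ 0 ↔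
      D.ConstOnLines (Sum.elim (twist v) (twist w)) ∧
        D'.ConstOnLines (Sum.elim (twist w) (twist u)) := by
    rw [mul_ne_zero_iff, ← Rmat_ne_zero_iff x, ← Rmat_ne_zero_iff x, ne_eq, ne_eq, ne_eq, ne_eq,
      hX, hY]
  refine maskEquiv_mul_of_existsUnique (fun v u w hw => ?_) (fun v u hvu => ?_)
  · have hvw := (hterm v w u).mp hw
    exact (Rmat_ne_zero_iff x E v u).mpr (hE.constOnLines hvw.1 hvw.2)
  · simp_rw [hterm]
    exact twist_involutive.bijective.existsUnique_iff.mp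
      (hE.existsUnique_middle_word hz ((Rmat_ne_zero_iff x E v u).mp hvu))

end TLBlob
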